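/- Let C be a category with covers and suppose given morphisms f : X → Y, g : X → Z, h : Y → Z in sC with h ∘ f = g, where g is an n-stack. If f is a Kan fibration, then f is an n-stack. -/

import Mathlib

open CategoryTheory CategoryTheory.Limits Opposite

universe v u

/-- A *category with covers*: a (locally small) category `C` together with a distinguished
subcategory of morphisms, called *covers*, satisfying the axioms of the paper:
(i) there is a terminal object and every map to it is a cover;
(ii) pullbacks of covers along arbitrary morphisms exist and are covers;
(iii) if `f` and `f ≫ g` are covers then so is `g`;
(iv) every cover is an effective epimorphism, i.e. `X ×_Y X ⇉ X → Y` is a coequalizer. -/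
structure CoversOn (C : Type u) [Category.{v} C] where
  /-- the distinguished class of covers -/
  isCover : ∀ ⦃X Y : C⦄, (X ⟶ Y) → Prop
  /-- identities are covers (covers form a subcategory) -/
  isCover_id : ∀ X : C, isCover (𝟙 X)
  /-- covers are closed under composition (covers form a subcategory) -/
  isCover_comp : ∀ {X Y Z : C} {f : X ⟶ Y} {g : Y ⟶ Z}, isCover f → isCover g → isCover (f ≫ g)
  /-- axiom (i): `C` has a terminal object -/
  hasTerminal : HasTerminal C
  /-- axiom (i): every morphism to a terminal object is a cover -/
  isCover_toTerminal : ∀ {T : C} (hT : IsTerminal T) (X : C), isCover (hT.from X)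
  /-- axiom (ii): pullbacks of covers along arbitrary morphisms exist -/
  hasPullback_of_isCover : ∀ {X Y Z : C} (f : X ⟶ Z) {g : Y ⟶ Z}, isCover g → HasPullback f g
  /-- axiom (ii): pullbacks of covers are covers -/
  isCover_of_isPullback : ∀ {P X Y Z : C} {fst : P ⟶ X} {snd : P ⟶ Y} {f : X ⟶ Z} {g : Y ⟶ Z},
    IsPullback fst snd f g → isCover g → isCover fst
  /-- axiom (iii): right cancellation -/
  isCover_of_comp : ∀ {X Y Z : C} {f : X ⟶ Y} {g : Y ⟶ Z}, isCover f → isCover (f ≫ g) → isCover g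
  /-- axiom (iv): covers are effective epimorphisms: for any kernel pair `p₁, p₂ : X ×_Y X ⇉ X`
  of a cover `f : X ⟶ Y`, the fork `X ×_Y X ⇉ X → Y` is a coequalizer -/
  isCoequalizer_of_isCover : ∀ {X Y : C} {f : X ⟶ Y}, isCover f →
    ∀ {P : C} {p₁ p₂ : P ⟶ X} (h : IsPullback p₁ p₂ f f),
      Nonempty (IsColimit (Cofork.ofπ f h.w))

open Simplicial

namespace CatCov

variable {C : Type u} [Category.{v} C]

/-- The concrete pullback presheaf `F ×_H G` of two presheaf morphisms `α : F ⟶ H`, `β : G ⟶ H`. -/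
@[simps]
def cpb {F G H : Cᵒᵖ ⥤ Type v} (α : F ⟶ H) (β : G ⟶ H) : Cᵒᵖ ⥤ Type v where
  obj U := { p : F.obj U × G.obj U // α.app U p.1 = β.app U p.2 }
  map {U V} u := TypeCat.ofHom fun p => ⟨(F.map u p.1.1, G.map u p.1.2), by
    dsimp
    rw [FunctorToTypes.naturality, FunctorToTypes.naturality]
    exact congrArg (H.map u) p.2⟩
  map_id U := by
    refine ConcreteCategory.hom_ext _ _ fun p => ?_
    apply Subtype.ext
    dsimp
    simp
  map_comp {U V W} u v := by
    refine ConcreteCategory.hom_ext _ _ fun p => ?_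
    apply Subtype.ext
    dsimp
    simp

/-- First projection of the concrete pullback presheaf. -/
@[simps]
def cpbFst {F G H : Cᵒᵖ ⥤ Type v} (α : F ⟶ H) (β : G ⟶ H) : cpb α β ⟶ F where
  app U := TypeCat.ofHom fun p => p.1.1

/-- Second projection of the concrete pullback presheaf. -/
@[simps]
def cpbSnd {F G H : Cᵒᵖ ⥤ Type v} (α : F ⟶ H) (β : G ⟶ H) : cpb α β ⟶ G where
  app U := TypeCat.ofHom fun p => p.1.2

/-- The universal map into the concrete pullback presheaf. -/
@[simps]
def cpbLift {E F G H : Cᵒᵖ ⥤ Type v} {α : F ⟶ H} {β : G ⟶ H}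
    (p : E ⟶ F) (q : E ⟶ G) (w : p ≫ α = q ≫ β) : E ⟶ cpb α β where
  app U := TypeCat.ofHom fun x => ⟨(p.app U x, q.app U x), by
    simpa using ConcreteCategory.congr_hom (NatTrans.congr_app w U) x⟩
  naturality {U V} u := by
    refine ConcreteCategory.hom_ext _ _ fun x => ?_
    apply Subtype.ext
    simp only [ConcreteCategory.comp_apply]
    exact Prod.ext (NatTrans.naturality_apply p u x) (NatTrans.naturality_apply q u x)

/-- Functoriality of the concrete pullback presheaf in the defining cospan. -/
@[simps]
def cpbMap {F G H F' G' H' : Cᵒᵖ ⥤ Type v} {α : F ⟶ H} {β : G ⟶ H}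
    {α' : F' ⟶ H'} {β' : G' ⟶ H'} (tF : F ⟶ F') (tG : G ⟶ G') (tH : H ⟶ H')
    (hα : α ≫ tH = tF ≫ α') (hβ : β ≫ tH = tG ≫ β') : cpb α β ⟶ cpb α' β' where
  app U := TypeCat.ofHom fun p => ⟨(tF.app U p.1.1, tG.app U p.1.2), by
    have h1 := ConcreteCategory.congr_hom (NatTrans.congr_app hα U) p.1.1
    have h2 := ConcreteCategory.congr_hom (NatTrans.congr_app hβ U) p.1.2
    dsimp at h1 h2 ⊢
    rw [← h1, ← h2]
    exact congrArg (tH.app U) p.2⟩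
  naturality {U V} u := by
    refine ConcreteCategory.hom_ext _ _ fun p => ?_
    apply Subtype.ext
    simp only [ConcreteCategory.comp_apply]
    exact Prod.ext (NatTrans.naturality_apply tF u p.1.1) (NatTrans.naturality_apply tG u p.1.2)

/-- For a simplicial presheaf `F` and a simplicial set `K`, the presheaf `hom(K, F)` of simplicial
maps from `K` into (the `U`-points of) `F`; concretely, a `U`-point is a compatible family
assigning to each simplex of `K` a `U`-point of the corresponding level of `F`. -/
@[simps]
def sHom (K : SSet.{v}) (F : SimplicialObject (Cᵒᵖ ⥤ Type v)) : Cᵒᵖ ⥤ Type v where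
  obj U := { ξ : ∀ (j : SimplexCategoryᵒᵖ), K.obj j → (F.obj j).obj U //
      ∀ (j j' : SimplexCategoryᵒᵖ) (β : j ⟶ j') (a : K.obj j),
        ξ j' (K.map β a) = (F.map β).app U (ξ j a) }
  map {U V} u := TypeCat.ofHom fun ξ => ⟨fun j a => (F.obj j).map u (ξ.1 j a), by
    intro j j' β a
    dsimp only
    rw [ξ.2 j j' β a]
    exact (NatTrans.naturality_apply (F.map β) u (ξ.1 j a)).symm⟩
  map_id U := by
    refine ConcreteCategory.hom_ext _ _ fun ξ => ?_
    apply Subtype.ext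
    funext j a
    dsimp
    simp
  map_comp {U V W} u v := by
    refine ConcreteCategory.hom_ext _ _ fun ξ => ?_
    apply Subtype.ext
    funext j a
    dsimp
    simp

/-- `hom(K, -)` is covariantly functorial in the simplicial presheaf. -/
@[simps]
def sHomMap (K : SSet.{v}) {F G : SimplicialObject (Cᵒᵖ ⥤ Type v)} (φ : F ⟶ G) :
    sHom K F ⟶ sHom K G where
  app U := TypeCat.ofHom fun ξ => ⟨fun j a => (φ.app j).app U (ξ.1 j a), by
    intro j j' β a
    dsimp only
    rw [ξ.2 j j' β a]
    exact ConcreteCategory.congr_hom (congrArg (fun (t : F.obj j ⟶ G.obj j') => t.app U) (φ.naturality β)) (ξ.1 j a)⟩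
  naturality {U V} u := by
    refine ConcreteCategory.hom_ext _ _ fun ξ => ?_
    apply Subtype.ext
    funext j a
    dsimp
    exact NatTrans.naturality_apply (φ.app j) u (ξ.1 j a)

/-- `hom(-, F)` is contravariantly functorial in the simplicial set. -/
@[simps]
def sHomRes {K L : SSet.{v}} (i : K ⟶ L) (F : SimplicialObject (Cᵒᵖ ⥤ Type v)) :
    sHom L F ⟶ sHom K F where
  app U := TypeCat.ofHom fun ξ => ⟨fun j a => ξ.1 j (i.app j a), by
    intro j j' β a
    rw [← ξ.2 j j' β (i.app j a)]
    exact congrArg (ξ.1 j') (ConcreteCategory.congr_hom (i.naturality β) a)⟩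
  naturality {U V} u := by
    refine ConcreteCategory.hom_ext _ _ fun ξ => ?_
    rfl

/-- The canonical "Yoneda" map sending an `n`-simplex of a simplicial presheaf `F` to the
corresponding simplicial map `Δ[n] ⟶ F`. -/
@[simps]
def fromSimplex (F : SimplicialObject (Cᵒᵖ ⥤ Type v)) (n : SimplexCategory) :
    F.obj (op n) ⟶ sHom (SSet.stdSimplex.obj n) F where
  app U := TypeCat.ofHom fun x => ⟨fun j α => (F.map α.down.op).app U x, by
    intro j j' β α
    show (F.map ((β.unop ≫ α.down)).op).app U x = _
    rw [op_comp, Quiver.Hom.op_unop, F.map_comp]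
    rfl⟩
  naturality {U V} u := by
    refine ConcreteCategory.hom_ext _ _ fun x => ?_
    apply Subtype.ext
    funext j α
    dsimp
    exact NatTrans.naturality_apply (F.map α.down.op) u x

/-- Restriction of an `n`-simplex of `F` along a map of simplicial sets `ι : K ⟶ Δ[n]`. -/
def restrictAlong {K : SSet.{v}} {n : SimplexCategory} (ι : K ⟶ SSet.stdSimplex.obj n)
    (F : SimplicialObject (Cᵒᵖ ⥤ Type v)) : F.obj (op n) ⟶ sHom K F :=
  fromSimplex F n ≫ sHomRes ι F

lemma restrictAlong_natural {K : SSet.{v}} {n : SimplexCategory}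
    (ι : K ⟶ SSet.stdSimplex.obj n) {F G : SimplicialObject (Cᵒᵖ ⥤ Type v)} (φ : F ⟶ G) :
    restrictAlong ι F ≫ sHomMap K φ = φ.app (op n) ≫ restrictAlong ι G := by
  apply NatTrans.ext
  funext U
  refine ConcreteCategory.hom_ext _ _ fun x => ?_
  apply Subtype.ext
  funext j a
  dsimp [restrictAlong]
  exact ConcreteCategory.congr_hom (congrArg (fun (t : F.obj (op n) ⟶ G.obj j) => t.app U)
    (φ.naturality (ι.app j a).down.op)) x

/-- For `ι : K ⟶ Δ[n]` and `φ : F ⟶ G`, the relative object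
`(K ↪ Δ[n])(φ) := hom(K, F) ×_{hom(K, G)} G_n`. -/
def relObj {K : SSet.{v}} {n : SimplexCategory} (ι : K ⟶ SSet.stdSimplex.obj n)
    {F G : SimplicialObject (Cᵒᵖ ⥤ Type v)} (φ : F ⟶ G) : Cᵒᵖ ⥤ Type v :=
  cpb (sHomMap K φ) (restrictAlong ι G)

/-- The canonical comparison map `F_n ⟶ hom(K, F) ×_{hom(K, G)} G_n`. -/
def relMap {K : SSet.{v}} {n : SimplexCategory} (ι : K ⟶ SSet.stdSimplex.obj n)
    {F G : SimplicialObject (Cᵒᵖ ⥤ Type v)} (φ : F ⟶ G) : F.obj (op n) ⟶ relObj ι φ :=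
  cpbLift (restrictAlong ι F) (φ.app (op n)) (restrictAlong_natural ι φ)

/-- `RepCover cov w` says: the presheaves `F` and `G` are representable, and, under (a choice of)
representing isomorphisms, the map of presheaves `w : F ⟶ G` corresponds to a cover in `C`.
(Covers are stable under pre- and post-composition with isomorphisms, so this does not depend on the
choice of representation.) -/
def RepCover (cov : CoversOn C) {F G : Cᵒᵖ ⥤ Type v} (w : F ⟶ G) : Prop :=
  ∃ (A B : C) (g : A ⟶ B) (eA : yoneda.obj A ≅ F) (eB : yoneda.obj B ≅ G),
    cov.isCover g ∧ eA.hom ≫ w = yoneda.map g ≫ eB.hom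

/-- A simplicial object of `C`, regarded as a simplicial presheaf via the Yoneda embedding. -/
abbrev ev (X : SimplicialObject C) : SimplicialObject (Cᵒᵖ ⥤ Type v) :=
  X ⋙ yoneda

/-- A morphism of simplicial objects of `C`, regarded as a morphism of simplicial presheaves. -/
abbrev evMap {X Y : SimplicialObject C} (f : X ⟶ Y) : ev X ⟶ ev Y :=
  Functor.whiskerRight f yoneda

/-- The relative horn object `Λⁿ_i(φ) := Λⁿ_i F ×_{Λⁿ_i G} G_n`. -/
abbrev hornObj (n : ℕ) (i : Fin (n + 1)) {F G : SimplicialObject (Cᵒᵖ ⥤ Type v)} (φ : F ⟶ G) :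
    Cᵒᵖ ⥤ Type v :=
  relObj (SSet.horn n i).ι φ

/-- The relative horn-filling map `λⁿ_i(φ) : F_n ⟶ Λⁿ_i(φ)`. -/
abbrev hornMap (n : ℕ) (i : Fin (n + 1)) {F G : SimplicialObject (Cᵒᵖ ⥤ Type v)} (φ : F ⟶ G) :
    F.obj (op (SimplexCategory.mk n)) ⟶ hornObj n i φ :=
  relMap (SSet.horn n i).ι φ

/-- The relative matching object `Mₙ(φ) := Mₙ F ×_{Mₙ G} G_n`. -/
abbrev matchObj (n : ℕ) {F G : SimplicialObject (Cᵒᵖ ⥤ Type v)} (φ : F ⟶ G) :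
    Cᵒᵖ ⥤ Type v :=
  relObj (SSet.boundary n).ι φ

/-- The relative boundary-filling map `μₙ(φ) : F_n ⟶ Mₙ(φ)`. -/
abbrev matchMap (n : ℕ) {F G : SimplicialObject (Cᵒᵖ ⥤ Type v)} (φ : F ⟶ G) :
    F.obj (op (SimplexCategory.mk n)) ⟶ matchObj n φ :=
  relMap (SSet.boundary n).ι φ

/-- A morphism of simplicial presheaves is a *Kan fibration* (relative to the covers on `C`) if,
for all `n ≥ 1` and all `0 ≤ i ≤ n`, the relative horn object `Λⁿ_i(φ)` is representable and the
horn-filling map `λⁿ_i(φ)` is (represented by) a cover. -/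
def IsKanFibration (cov : CoversOn C) {F G : SimplicialObject (Cᵒᵖ ⥤ Type v)} (φ : F ⟶ G) :
    Prop :=
  ∀ (n : ℕ) (i : Fin (n + 2)), RepCover cov (hornMap (n + 1) i φ)

/-- A morphism of simplicial presheaves is an *`N`-stack* if it is a Kan fibration and the
horn-filling maps `λᵏ_i(φ)` are isomorphisms for all `k > N`. -/
def IsStack (cov : CoversOn C) (N : ℕ) {F G : SimplicialObject (Cᵒᵖ ⥤ Type v)} (φ : F ⟶ G) :
    Prop :=
  IsKanFibration cov φ ∧
    ∀ (k : ℕ) (i : Fin (k + 2)), N < k + 1 → IsIso (hornMap (k + 1) i φ)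

/-- A cover is an epimorphism. -/
lemma epi_of_isCover (cov : CoversOn C) {A B : C} {c : A ⟶ B} (hc : cov.isCover c) : Epi c := by
  haveI : HasPullback c c := cov.hasPullback_of_isCover c hc
  obtain ⟨hcoeq⟩ := cov.isCoequalizer_of_isCover hc (IsPullback.of_hasPullback c c)
  exact epi_of_isColimit_cofork hcoeq

/-- A `RepCover` with a retraction is an isomorphism. -/
lemma isIso_of_repCover_of_retraction (cov : CoversOn C) {F G : Cᵒᵖ ⥤ Type v} {w : F ⟶ G}
    (hw : RepCover cov w) (r : G ⟶ F) (hr : w ≫ r = 𝟙 F) : IsIso w := by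
  obtain ⟨A, B, c, eA, eB, hc, hcomm⟩ := hw
  -- the retraction of `yoneda.map c`
  have hy : yoneda.map c = eA.hom ≫ w ≫ eB.inv := by
    rw [← Category.assoc, hcomm]; simp
  obtain ⟨r', hr'⟩ : ∃ r' : B ⟶ A, yoneda.map r' = eB.hom ≫ r ≫ eA.inv :=
    ⟨yoneda.preimage _, yoneda.map_preimage _⟩
  have hcr : c ≫ r' = 𝟙 A := by
    apply yoneda.map_injective
    rw [yoneda.map_comp, hy, hr', yoneda.map_id]
    slice_lhs 3 4 => rw [Iso.inv_hom_id]
    slice_lhs 2 4 => rw [Category.id_comp, hr]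
    simp
  haveI : Epi c := epi_of_isCover cov hc
  haveI : IsIso c := by
    refine ⟨r', hcr, ?_⟩
    rw [← cancel_epi c, ← Category.assoc, hcr, Category.id_comp, Category.comp_id]
  have : w = eA.inv ≫ yoneda.map c ≫ eB.hom := by
    rw [hy]; simp
  rw [this]
  infer_instance

end CatCov
open CatCov in
/-- Let `C` be a category with covers and suppose given `f : X ⟶ Y`,
`g : X ⟶ Z`, `h : Y ⟶ Z` in `sC` with `h ∘ f = g`, where `g` is an `n`-stack.  If `f` is a Kan
fibration, then `f` is an `n`-stack. -/
theorem stmt_10 {C : Type u} [Category.{v} C] (cov : CoversOn C) (n : ℕ)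
    {X Y Z : SimplicialObject C} (f : X ⟶ Y) (g : X ⟶ Z) (h : Y ⟶ Z)
    (hcomp : f ≫ h = g)
    (hg : IsStack cov n (evMap g))
    (hf : IsKanFibration cov (evMap f)) :
    IsStack cov n (evMap f) := by
  subst hcomp
  refine ⟨hf, fun k i hk => ?_⟩
  -- the comparison map Λ(f) ⟶ Λ(f ≫ h)
  have hα : sHomMap (SSet.horn (k + 1) i) (evMap f) ≫ sHomMap _ (evMap h) =
      𝟙 (sHom _ (ev X)) ≫ sHomMap _ (evMap (f ≫ h)) := by
    apply NatTrans.ext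
    funext U
    refine ConcreteCategory.hom_ext _ _ fun ξ => ?_
    apply Subtype.ext
    funext j a
    simp
    exact Category.assoc _ _ _
  have hβ := restrictAlong_natural (SSet.horn (k + 1) i).ι (evMap h)
  let θ : hornObj (k + 1) i (evMap f) ⟶ hornObj (k + 1) i (evMap (f ≫ h)) :=
    cpbMap (𝟙 _) ((evMap h).app _) (sHomMap _ (evMap h)) hα hβ
  have hfac : hornMap (k + 1) i (evMap f) ≫ θ = hornMap (k + 1) i (evMap (f ≫ h)) := by
    apply NatTrans.ext
    funext U
    refine ConcreteCategory.hom_ext _ _ fun x => ?_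
    apply Subtype.ext
    dsimp [θ, hornMap, relMap, relObj]
    simp
    exact Prod.ext rfl (Category.assoc _ _ _)
  haveI := hg.2 k i hk
  refine isIso_of_repCover_of_retraction cov (hf k i)
    (θ ≫ inv (hornMap (k + 1) i (evMap (f ≫ h)))) ?_
  rw [← Category.assoc, hfac, IsIso.hom_inv_id]
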